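/- arXiv:0803.0904 — 2 statements merged into one kernel-verified Lean document; each statement's English description precedes it below -/
import Mathlib

section
/- If v_k ∈ 𝒞 and v_k → v̄ uniformly on Θ for some v̄ ∈ 𝒞, then I[v_k] → I[v̄] as k → ∞. -/
/-! Dominated convergence. A convex function is locally Lipschitz on the interior of `Θ`, so by
Rademacher's theorem every `v k` and `vbar` is differentiable at almost every point of `Θ` (the
frontier of a convex set is null). At such a point `θ` the gradient is a subgradient, hence lies in
the compact set `Q`; a cluster point of `∇ v k θ` is a subgradient of `vbar` at `θ`, and at an
interior point of differentiability the gradient is the only subgradient, so `∇ v k θ → ∇ vbar θ`.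
The integrands are bounded uniformly in `k` because the gradients lie in `Q` and
`v k θ ≤ v k x₀ + ⟪∇ v k θ, θ - x₀⟫`. -/

open scoped RealInnerProductSpace
open MeasureTheory Filter

noncomputable section

/-- `b` is a subgradient of `v` at `x`, relative to the domain `Θ`. -/
def IsSubgradientOn {n : ℕ} (Θ : Set (EuclideanSpace ℝ (Fin n)))
    (v : EuclideanSpace ℝ (Fin n) → ℝ) (b x : EuclideanSpace ℝ (Fin n)) : Prop :=
  ∀ y ∈ Θ, ⟪b, y - x⟫ ≤ v y - v x

/-- Membership in the admissible class `𝒞`. -/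
def MemC {n : ℕ} (Θ Q : Set (EuclideanSpace ℝ (Fin n)))
    (v : EuclideanSpace ℝ (Fin n) → ℝ) : Prop :=
  ConvexOn ℝ Θ v ∧ (∀ x ∈ Θ, 0 ≤ v x) ∧
    (∀ x ∈ Θ, ∀ b : EuclideanSpace ℝ (Fin n), IsSubgradientOn Θ v b x → b ∈ Q)

/-- The functional `I[v] = ∫_Θ (v(θ) − θ·∇v(θ) + C(∇v(θ))) dθ`. -/
def Ifun {n : ℕ} (Θ : Set (EuclideanSpace ℝ (Fin n)))
    (C : EuclideanSpace ℝ (Fin n) → ℝ) (v : EuclideanSpace ℝ (Fin n) → ℝ) : ℝ :=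
  ∫ θ in Θ, (v θ - ⟪θ, gradient v θ⟫ + C (gradient v θ))

open Set
open scoped Topology

theorem LocallyLipschitzOn.ae_differentiableAt {E F : Type*} [NormedAddCommGroup E]
    [NormedSpace ℝ E] [FiniteDimensional ℝ E] [MeasurableSpace E] [BorelSpace E]
    [NormedAddCommGroup F] [NormedSpace ℝ F] [FiniteDimensional ℝ F]
    (μ : Measure E) [μ.IsAddHaarMeasure] {f : E → F} {s : Set E} (hs : IsOpen s)
    (hf : LocallyLipschitzOn s f) : ∀ᵐ x ∂μ, x ∈ s → DifferentiableAt ℝ f x := by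
  have hloc : ∀ x ∈ s, ∃ K U, IsOpen U ∧ x ∈ U ∧ LipschitzOnWith K f U := by
    intro x hx
    obtain ⟨K, t, ht, hK⟩ := hf hx
    rw [hs.nhdsWithin_eq hx] at ht
    exact ⟨K, interior t, isOpen_interior, mem_interior_iff_mem_nhds.2 ht,
      hK.mono interior_subset⟩
  choose! K U hUopen hxU hKU using hloc
  obtain ⟨T, hTs, hTc, hTU⟩ := TopologicalSpace.isOpen_biUnion_countable s U hUopen
  have hdiff : ∀ᵐ x ∂μ, ∀ i ∈ T, x ∈ U i → DifferentiableAt ℝ f x := by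
    refine (ae_ball_iff hTc).2 fun i hi => ?_
    filter_upwards [(hKU i (hTs hi)).ae_differentiableWithinAt_of_mem (μ := μ)] with x hx hxU
    exact (hx hxU).differentiableAt ((hUopen i (hTs hi)).mem_nhds hxU)
  filter_upwards [hdiff] with x hx hxs
  have : x ∈ ⋃ i ∈ T, U i := hTU ▸ mem_biUnion hxs (hxU x hxs)
  obtain ⟨i, hi, hxi⟩ := mem_iUnion₂.1 this
  exact hx i hi hxi

theorem Convex.ae_restrict_mem_interior {E : Type*} [NormedAddCommGroup E]
    [NormedSpace ℝ E] [FiniteDimensional ℝ E] [MeasurableSpace E] [BorelSpace E]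
    (μ : Measure E) [μ.IsAddHaarMeasure] {s : Set E} (hs : Convex ℝ s) :
    ∀ᵐ x ∂μ.restrict s, x ∈ interior s := by
  rw [← Measure.restrict_congr_set (interior_ae_eq_of_null_frontier (hs.addHaar_frontier μ))]
  exact ae_restrict_mem isOpen_interior.measurableSet

theorem ConvexOn.ae_restrict_differentiableAt {E : Type*} [NormedAddCommGroup E]
    [NormedSpace ℝ E] [FiniteDimensional ℝ E] [MeasurableSpace E] [BorelSpace E]
    (μ : Measure E) [μ.IsAddHaarMeasure] {f : E → ℝ} {s : Set E} (hf : ConvexOn ℝ s f) :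
    ∀ᵐ x ∂μ.restrict s, DifferentiableAt ℝ f x := by
  filter_upwards [hf.1.ae_restrict_mem_interior μ, ae_restrict_of_ae
    (hf.locallyLipschitzOn_interior.ae_differentiableAt μ isOpen_interior)] with x hx hd
  exact hd hx

section Subgradient

variable {n : ℕ} {Θ : Set (EuclideanSpace ℝ (Fin n))} {w : EuclideanSpace ℝ (Fin n) → ℝ}
  {b θ : EuclideanSpace ℝ (Fin n)}

theorem ConvexOn.isSubgradientOn_gradient (hw : ConvexOn ℝ Θ w) (hθ : θ ∈ Θ)
    (hd : DifferentiableAt ℝ w θ) : IsSubgradientOn Θ w (gradient w θ) θ := by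
  intro y hy
  have hline : ConvexOn ℝ (Icc (0 : ℝ) 1) (w ∘ AffineMap.lineMap θ y) :=
    (hw.comp_affineMap _).subset (fun t ht => hw.1.lineMap_mem hθ hy ht) (convex_Icc 0 1)
  have hderiv : HasDerivAt (w ∘ AffineMap.lineMap θ y) ⟪gradient w θ, y - θ⟫ (0 : ℝ) := by
    have hw' : HasFDerivAt w (fderiv ℝ w θ) (AffineMap.lineMap θ y (0 : ℝ)) := by
      simpa using hd.hasFDerivAt
    simpa [gradient, map_sub] using hw'.comp_hasDerivAt (0 : ℝ) AffineMap.hasDerivAt_lineMap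
  simpa [slope] using hline.le_slope_of_hasDerivAt (by simp) (by simp) zero_lt_one hderiv

theorem IsSubgradientOn.eq_gradient (hb : IsSubgradientOn Θ w b θ) (hθ : θ ∈ interior Θ)
    (hd : DifferentiableAt ℝ w θ) : b = gradient w θ := by
  have hmin : IsLocalMin (fun x => w x - ⟪b, x⟫) θ := by
    refine IsMinOn.isLocalMin (fun y hy => ?_) (mem_interior_iff_mem_nhds.1 hθ)
    have := hb y hy
    simp only [Set.mem_ofPred_eq, inner_sub_right] at this ⊢
    linarith
  have := hmin.hasFDerivAt_eq_zero
    (hd.hasFDerivAt.sub (InnerProductSpace.toDual ℝ _ b).hasFDerivAt)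
  rw [sub_eq_zero] at this
  simp [gradient, this]

theorem IsSubgradientOn.of_tendsto {ι : Type*} {l : Filter ι} [l.NeBot]
    {f : ι → EuclideanSpace ℝ (Fin n) → ℝ} {c : ι → EuclideanSpace ℝ (Fin n)}
    (hc : ∀ i, IsSubgradientOn Θ (f i) (c i) θ) (hθ : θ ∈ Θ)
    (hf : ∀ y ∈ Θ, Tendsto (f · y) l (𝓝 (w y))) (hcb : Tendsto c l (𝓝 b)) :
    IsSubgradientOn Θ w b θ := fun y hy =>
  le_of_tendsto_of_tendsto' (hcb.inner tendsto_const_nhds) ((hf y hy).sub (hf θ hθ))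
    fun i => hc i y hy

theorem tendsto_gradient_of_tendsto {Q : Set (EuclideanSpace ℝ (Fin n))} (hQ : IsCompact Q)
    {v : ℕ → EuclideanSpace ℝ (Fin n) → ℝ} (hv : ∀ k, ConvexOn ℝ Θ (v k))
    (hvQ : ∀ k, gradient (v k) θ ∈ Q)
    (hlim : ∀ y ∈ Θ, Tendsto (v · y) atTop (𝓝 (w y)))
    (hθ : θ ∈ interior Θ) (hd : ∀ k, DifferentiableAt ℝ (v k) θ)
    (hdw : DifferentiableAt ℝ w θ) :
    Tendsto (fun k => gradient (v k) θ) atTop (𝓝 (gradient w θ)) := by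
  refine hQ.tendsto_nhds_of_unique_mapClusterPt (Eventually.of_forall hvQ) fun b _ hb => ?_
  obtain ⟨ψ, hψ, hψb⟩ := hb.tendsto_subseq
  have hθΘ := interior_subset hθ
  refine IsSubgradientOn.eq_gradient ?_ hθ hdw
  exact .of_tendsto (fun j => (hv (ψ j)).isSubgradientOn_gradient hθΘ (hd (ψ j))) hθΘ
    (fun y hy => (hlim y hy).comp hψ.tendsto_atTop) hψb

theorem MemC.gradient_mem {Q : Set (EuclideanSpace ℝ (Fin n))} (hw : MemC Θ Q w)
    (hθ : θ ∈ Θ) (hd : DifferentiableAt ℝ w θ) : gradient w θ ∈ Q :=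
  hw.2.2 θ hθ _ (hw.1.isSubgradientOn_gradient hθ hd)

def Iintegrand (C w : EuclideanSpace ℝ (Fin n) → ℝ) (θ : EuclideanSpace ℝ (Fin n)) : ℝ :=
  w θ - ⟪θ, gradient w θ⟫ + C (gradient w θ)

theorem MemC.norm_Iintegrand_le {Q : Set (EuclideanSpace ℝ (Fin n))}
    {C : EuclideanSpace ℝ (Fin n) → ℝ} {M R K : ℝ} {x₀ : EuclideanSpace ℝ (Fin n)}
    (hw : MemC Θ Q w) (hM : ∀ q ∈ Q, ‖q‖ ≤ M) (hR : ∀ x ∈ Θ, ‖x‖ ≤ R)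
    (hK : ∀ q ∈ Q, ‖C q‖ ≤ K) (hx₀ : x₀ ∈ Θ) (hθ : θ ∈ Θ) (hd : DifferentiableAt ℝ w θ) :
    ‖Iintegrand C w θ‖ ≤ w x₀ + 3 * (R * M) + K := by
  have hsub := hw.1.isSubgradientOn_gradient hθ hd
  have hgM : ‖gradient w θ‖ ≤ M := hM _ (hw.gradient_mem hθ hd)
  have hM0 : 0 ≤ M := (norm_nonneg _).trans hgM
  have hθR := hR θ hθ
  have hupper : w θ ≤ w x₀ + 2 * (R * M) := by
    have hdist : ‖x₀ - θ‖ ≤ 2 * R := (norm_sub_le _ _).trans (by linarith [hR x₀ hx₀])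
    have := (abs_le.1 ((abs_real_inner_le_norm (gradient w θ) (x₀ - θ)).trans
      (mul_le_mul hgM hdist (norm_nonneg _) hM0))).1
    linarith [hsub x₀ hx₀]
  have hinner : |⟪θ, gradient w θ⟫| ≤ R * M :=
    (abs_real_inner_le_norm _ _).trans
      (mul_le_mul hθR hgM (norm_nonneg _) ((norm_nonneg _).trans hθR))
  have hCg := hK _ (hw.gradient_mem hθ hd)
  rw [Real.norm_eq_abs] at hCg ⊢
  rw [abs_le] at hinner hCg ⊢
  have := hw.2.1 θ hθ
  unfold Iintegrand
  constructor <;> linarith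

theorem tendsto_Iintegrand {Q : Set (EuclideanSpace ℝ (Fin n))} (hQ : IsCompact Q)
    {C : EuclideanSpace ℝ (Fin n) → ℝ} (hC : Continuous C)
    {v : ℕ → EuclideanSpace ℝ (Fin n) → ℝ} (hv : ∀ k, MemC Θ Q (v k))
    (hlim : ∀ y ∈ Θ, Tendsto (v · y) atTop (𝓝 (w y))) (hθ : θ ∈ interior Θ)
    (hd : ∀ k, DifferentiableAt ℝ (v k) θ) (hdw : DifferentiableAt ℝ w θ) :
    Tendsto (fun k => Iintegrand C (v k) θ) atTop (𝓝 (Iintegrand C w θ)) := by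
  have hθΘ := interior_subset hθ
  have hgrad := tendsto_gradient_of_tendsto hQ (fun k => (hv k).1)
    (fun k => (hv k).gradient_mem hθΘ (hd k)) hlim hθ hd hdw
  exact ((hlim θ hθΘ).sub (tendsto_const_nhds.inner hgrad)).add ((hC.tendsto _).comp hgrad)

theorem ConvexOn.aestronglyMeasurable_Iintegrand {C : EuclideanSpace ℝ (Fin n) → ℝ}
    (hC : Continuous C) (hw : ConvexOn ℝ Θ w) :
    AEStronglyMeasurable (Iintegrand C w) (volume.restrict Θ) := by
  rw [← Measure.restrict_congr_set
    (interior_ae_eq_of_null_frontier (hw.1.addHaar_frontier volume))]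
  have hgrad : Measurable (gradient w) :=
    (InnerProductSpace.toDual ℝ _).symm.continuous.measurable.comp (measurable_fderiv ℝ w)
  refine ((hw.continuousOn_interior.aestronglyMeasurable isOpen_interior.measurableSet).sub
    ?_).add ?_
  · exact (continuous_inner.measurable.comp (measurable_id.prodMk hgrad)).aestronglyMeasurable
  · exact (hC.measurable.comp hgrad).aestronglyMeasurable

end Subgradient

theorem stmt5_general {n : ℕ} (Θ Q : Set (EuclideanSpace ℝ (Fin n)))
    (hΘcomp : IsCompact Θ) (hΘconv : Convex ℝ Θ) (hΘint : (interior Θ).Nonempty)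
    (hQcomp : IsCompact Q)
    (C : EuclideanSpace ℝ (Fin n) → ℝ)
    (hC1 : ContDiff ℝ 1 C)
    (v : ℕ → EuclideanSpace ℝ (Fin n) → ℝ) (hv : ∀ k, MemC Θ Q (v k))
    (vbar : EuclideanSpace ℝ (Fin n) → ℝ) (hvbar : MemC Θ Q vbar)
    (hunif : TendstoUniformlyOn v vbar atTop Θ) :
    Tendsto (fun k => Ifun Θ C (v k)) atTop (nhds (Ifun Θ C vbar)) := by
  have hC : Continuous C := hC1.continuous
  have hlim : ∀ y ∈ Θ, Tendsto (v · y) atTop (𝓝 (vbar y)) := fun y hy => hunif.tendsto_at hy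
  obtain ⟨x₀, hx₀⟩ := hΘint.mono interior_subset
  obtain ⟨M, hM⟩ := hQcomp.isBounded.exists_norm_le
  obtain ⟨R, hR⟩ := hΘcomp.isBounded.exists_norm_le
  obtain ⟨K, hK⟩ := hQcomp.exists_bound_of_continuousOn hC.continuousOn
  have hgood : ∀ᵐ θ ∂volume.restrict Θ, θ ∈ interior Θ ∧ DifferentiableAt ℝ vbar θ ∧
      ∀ k, DifferentiableAt ℝ (v k) θ := by
    filter_upwards [hΘconv.ae_restrict_mem_interior volume,
      hvbar.1.ae_restrict_differentiableAt volume,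
      ae_all_iff.2 fun k => (hv k).1.ae_restrict_differentiableAt volume] with θ hθ hdbar hd
    exact ⟨hθ, hdbar, hd⟩
  have : IsFiniteMeasure (volume.restrict Θ) :=
    isFiniteMeasure_restrict.2 hΘcomp.measure_lt_top.ne
  refine tendsto_integral_filter_of_dominated_convergence (fun _ => vbar x₀ + 1 + 3 * (R * M) + K)
    (.of_forall fun k => (hv k).1.aestronglyMeasurable_Iintegrand hC) ?_ (integrable_const _) ?_
  · filter_upwards [(hlim x₀ hx₀).eventually (gt_mem_nhds (lt_add_one _))] with k hk
    filter_upwards [hgood] with θ hθ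
    obtain ⟨hθ, -, hd⟩ := hθ
    exact ((hv k).norm_Iintegrand_le hM hR hK hx₀ (interior_subset hθ) (hd k)).trans
      (by linarith)
  · filter_upwards [hgood] with θ hθ
    obtain ⟨hθ, hdbar, hd⟩ := hθ
    exact tendsto_Iintegrand hQcomp hC hv hlim hθ hd hdbar

/-- if `v_k ∈ 𝒞` converge uniformly on `Θ` to `v̄ ∈ 𝒞`, then
`I[v_k] → I[v̄]`. -/
theorem stmt5 {n : ℕ} (hn : 1 ≤ n) (Θ Q : Set (EuclideanSpace ℝ (Fin n)))
    (hΘcomp : IsCompact Θ) (hΘconv : Convex ℝ Θ) (hΘint : (interior Θ).Nonempty)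
    (hQne : Q.Nonempty) (hQcomp : IsCompact Q) (hQconv : Convex ℝ Q)
    (C : EuclideanSpace ℝ (Fin n) → ℝ)
    (hCstrict : StrictConvexOn ℝ Set.univ C) (hC1 : ContDiff ℝ 1 C)
    (v : ℕ → EuclideanSpace ℝ (Fin n) → ℝ) (hv : ∀ k, MemC Θ Q (v k))
    (vbar : EuclideanSpace ℝ (Fin n) → ℝ) (hvbar : MemC Θ Q vbar)
    (hunif : TendstoUniformlyOn v vbar atTop Θ) :
    Tendsto (fun k => Ifun Θ C (v k)) atTop (nhds (Ifun Θ C vbar)) :=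
  stmt5_general Θ Q hΘcomp hΘconv hΘint hQcomp C hC1 v hv vbar hvbar hunif
end
end

section
/- Let A ⊆ ℝⁿ be an open convex set and let f_k : A → ℝ be convex functions converging uniformly on A to a (necessarily convex) function f̄. Then for Lebesgue-almost every x ∈ A, f̄ and all the f_k are differentiable at x and ∇f_k(x) → ∇f̄(x). -/
/-!
Convex functions are locally Lipschitz, so by Rademacher's theorem each `f k` and the limit
`fbar` (convex as a pointwise limit of convex functions) are differentiable off a null set, and
countably many null sets are discarded at once. At a common point of differentiability `x`,
convexity along the line through `x` in direction `v` squeezes `∂ᵥ f k (x)` between one-sided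
difference quotients: `(f k x - f k (x - t v)) / t ≤ ∂ᵥ f k (x) ≤ (f k (x + t v) - f k x) / t`.
As `k → ∞` these quotients converge to those of `fbar`, which are close to `∂ᵥ fbar (x)` for
small `t`. In finite dimension, convergence of all directional derivatives is convergence of the
gradients.
-/

open MeasureTheory Filter Set
open scoped Topology RealInnerProductSpace

lemma ConvexOn.of_tendsto {E ι : Type*} [AddCommGroup E] [Module ℝ E] {l : Filter ι} [l.NeBot]
    {s : Set E} {f : ι → E → ℝ} {g : E → ℝ} (hf : ∀ k, ConvexOn ℝ s (f k))
    (hlim : ∀ x ∈ s, Tendsto (fun k => f k x) l (𝓝 (g x))) : ConvexOn ℝ s g := by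
  obtain ⟨k⟩ := l.nonempty_of_neBot
  refine ⟨(hf k).1, fun x hx y hy a b ha hb hab => ?_⟩
  exact le_of_tendsto_of_tendsto' (hlim _ ((hf k).1 hx hy ha hb hab))
    (((hlim x hx).const_mul a).add ((hlim y hy).const_mul b)) fun k => (hf k).2 hx hy ha hb hab

section Rademacher

variable {E F : Type*} [NormedAddCommGroup E] [NormedSpace ℝ E] [FiniteDimensional ℝ E]
  [MeasurableSpace E] [BorelSpace E] [NormedAddCommGroup F] [NormedSpace ℝ F]
  [FiniteDimensional ℝ F] (μ : Measure E) [μ.IsAddHaarMeasure] {s : Set E}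

theorem LocallyLipschitzOn.ae_differentiableAt_of_mem {f : E → F} (hs : IsOpen s)
    (hf : LocallyLipschitzOn s f) : ∀ᵐ x ∂μ, x ∈ s → DifferentiableAt ℝ f x := by
  have hnhds : ∀ x ∈ s, ∃ K, ∃ u ∈ 𝓝 x, IsOpen u ∧ LipschitzOnWith K f u := by
    intro x hx
    obtain ⟨K, t, ht, hK⟩ := hf hx
    rw [hs.nhdsWithin_eq hx] at ht
    exact ⟨K, interior t, interior_mem_nhds.2 ht, isOpen_interior, hK.mono interior_subset⟩
  choose! K u hux hu hKu using hnhds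
  obtain ⟨T, hTs, hTc, hsT⟩ := TopologicalSpace.countable_cover_nhdsWithin
    fun x hx => mem_nhdsWithin_of_mem_nhds (hux x hx)
  have hT : ∀ᵐ y ∂μ, ∀ x ∈ T, y ∈ u x → DifferentiableAt ℝ f y := by
    refine (ae_ball_iff hTc).2 fun x hx => ?_
    filter_upwards [(hKu x (hTs hx)).ae_differentiableWithinAt_of_mem (μ := μ)] with y hy hyu
    exact (hy hyu).differentiableAt ((hu x (hTs hx)).mem_nhds hyu)
  filter_upwards [hT] with y hy hys
  obtain ⟨x, hxT, hyx⟩ := mem_iUnion₂.1 (hsT hys)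
  exact hy x hxT hyx

theorem ConvexOn.ae_differentiableAt {f : E → ℝ} (hs : IsOpen s) (hf : ConvexOn ℝ s f) :
    ∀ᵐ x ∂μ.restrict s, DifferentiableAt ℝ f x :=
  (ae_restrict_iff' hs.measurableSet).2 <|
    (hf.locallyLipschitzOn hs).ae_differentiableAt_of_mem μ hs

end Rademacher

theorem ConvexOn.tendsto_deriv_of_tendsto {ι : Type*} {l : Filter ι} {φ : ι → ℝ → ℝ}
    {ψ : ℝ → ℝ} {I : Set ℝ} {x : ℝ} (hI : I ∈ 𝓝 x) (hφ : ∀ k, ConvexOn ℝ I (φ k))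
    (hlim : ∀ t ∈ I, Tendsto (fun k => φ k t) l (𝓝 (ψ t)))
    (hφd : ∀ k, DifferentiableAt ℝ (φ k) x) (hψd : DifferentiableAt ℝ ψ x) :
    Tendsto (fun k => deriv (φ k) x) l (𝓝 (deriv ψ x)) := by
  have hx : x ∈ I := mem_of_mem_nhds hI
  have hslope : ∀ t ∈ I, Tendsto (fun k => slope (φ k) x t) l (𝓝 (slope ψ x t)) :=
    fun t ht => ((hlim t ht).sub (hlim x hx)).const_smul _
  have hψ := hasDerivAt_iff_tendsto_slope.1 hψd.hasDerivAt
  have hIl : ∀ᶠ t in 𝓝[<] x, t ∈ I := mem_nhdsWithin_of_mem_nhds hI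
  have hIr : ∀ᶠ t in 𝓝[>] x, t ∈ I := mem_nhdsWithin_of_mem_nhds hI
  refine tendsto_order.2 ⟨fun a ha => ?_, fun b hb => ?_⟩
  · obtain ⟨t, ⟨htI, hta⟩, htx : t < x⟩ :=
      (hIl.and ((hψ.mono_left (nhdsWithin_mono _ fun t ht =>
        ne_of_lt ht)).eventually (lt_mem_nhds ha))).and self_mem_nhdsWithin |>.exists
    filter_upwards [(hslope t htI).eventually (lt_mem_nhds hta)] with k hk
    rw [slope_comm] at hk
    exact hk.trans_le ((hφ k).slope_le_deriv htI hx htx (hφd k))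
  · obtain ⟨t, ⟨htI, htb⟩, hxt : x < t⟩ :=
      (hIr.and ((hψ.mono_left (nhdsWithin_mono _ fun t ht =>
        ne_of_gt ht)).eventually (gt_mem_nhds hb))).and self_mem_nhdsWithin |>.exists
    filter_upwards [(hslope t htI).eventually (gt_mem_nhds htb)] with k hk
    exact ((hφ k).deriv_le_slope hx htI hxt (hφd k)).trans_lt hk

theorem ConvexOn.tendsto_fderiv_apply_of_tendsto {E ι : Type*} [NormedAddCommGroup E]
    [NormedSpace ℝ E] {l : Filter ι} {s : Set E} {f : ι → E → ℝ} {g : E → ℝ} {x : E}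
    (hs : s ∈ 𝓝 x) (hf : ∀ k, ConvexOn ℝ s (f k))
    (hlim : ∀ y ∈ s, Tendsto (fun k => f k y) l (𝓝 (g y)))
    (hfd : ∀ k, DifferentiableAt ℝ (f k) x) (hgd : DifferentiableAt ℝ g x) (v : E) :
    Tendsto (fun k => fderiv ℝ (f k) x v) l (𝓝 (fderiv ℝ g x v)) := by
  have hline : (fun t : ℝ => x + t • v) = AffineMap.lineMap (k := ℝ) x (x + v) := by
    ext t; simp [AffineMap.lineMap_apply, add_comm]
  have hI : (fun t : ℝ => x + t • v) ⁻¹' s ∈ 𝓝 0 := by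
    have hc : Tendsto (fun t : ℝ => x + t • v) (𝓝 0) (𝓝 x) := by
      simpa using (Continuous.tendsto (by fun_prop : Continuous fun t : ℝ => x + t • v) 0)
    exact hc hs
  simp only [← (hfd _).lineDeriv_eq_fderiv, ← hgd.lineDeriv_eq_fderiv, lineDeriv]
  refine ConvexOn.tendsto_deriv_of_tendsto hI (fun k => ?_) (fun t ht => hlim _ ht)
    (fun k => (hfd k).lineDifferentiableAt) hgd.lineDifferentiableAt
  change ConvexOn ℝ _ (f k ∘ fun t : ℝ => x + t • v)
  rw [hline]
  exact (hf k).comp_affineMap _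

theorem tendsto_of_forall_tendsto_inner {E ι : Type*} [NormedAddCommGroup E]
    [InnerProductSpace ℝ E] [FiniteDimensional ℝ E] {l : Filter ι} {u : ι → E} {u₀ : E}
    (h : ∀ v, Tendsto (fun k => ⟪u k, v⟫) l (𝓝 ⟪u₀, v⟫)) : Tendsto u l (𝓝 u₀) := by
  let b := stdOrthonormalBasis ℝ E
  rw [← b.sum_repr' u₀, show u = fun k => ∑ i, ⟪b i, u k⟫ • b i from
    funext fun k => (b.sum_repr' (u k)).symm]
  refine tendsto_finsetSum _ fun i _ => ?_
  simpa only [real_inner_comm (b i)] using (h (b i)).smul_const (b i)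

theorem stmt6_general {n : ℕ} (A : Set (EuclideanSpace ℝ (Fin n)))
    (hAopen : IsOpen A)
    (f : ℕ → EuclideanSpace ℝ (Fin n) → ℝ) (hf : ∀ k, ConvexOn ℝ A (f k))
    (fbar : EuclideanSpace ℝ (Fin n) → ℝ)
    (hunif : TendstoUniformlyOn f fbar atTop A) :
    ∀ᵐ x ∂(volume.restrict A),
      DifferentiableAt ℝ fbar x ∧ (∀ k, DifferentiableAt ℝ (f k) x) ∧
        Tendsto (fun k => gradient (f k) x) atTop (nhds (gradient fbar x)) := by
  have hlim : ∀ y ∈ A, Tendsto (fun k => f k y) atTop (𝓝 (fbar y)) :=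
    fun y hy => hunif.tendsto_at hy
  filter_upwards [(ConvexOn.of_tendsto hf hlim).ae_differentiableAt _ hAopen,
    ae_all_iff.2 fun k => (hf k).ae_differentiableAt _ hAopen,
    ae_restrict_mem hAopen.measurableSet] with x hfbard hfd hx
  refine ⟨hfbard, hfd, tendsto_of_forall_tendsto_inner fun v => ?_⟩
  simp only [gradient, InnerProductSpace.toDual_symm_apply]
  exact ConvexOn.tendsto_fderiv_apply_of_tendsto (hAopen.mem_nhds hx) hf hlim hfd hfbard v

/-- if convex functions `f_k` on an open convex set `A ⊆ ℝⁿ` converge uniformly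
on `A` to `f̄`, then for Lebesgue-a.e. `x ∈ A`, `f̄` and all `f_k` are differentiable at `x`
and `∇f_k(x) → ∇f̄(x)`. -/
theorem stmt6 {n : ℕ} (A : Set (EuclideanSpace ℝ (Fin n)))
    (hAopen : IsOpen A) (hAconv : Convex ℝ A)
    (f : ℕ → EuclideanSpace ℝ (Fin n) → ℝ) (hf : ∀ k, ConvexOn ℝ A (f k))
    (fbar : EuclideanSpace ℝ (Fin n) → ℝ)
    (hunif : TendstoUniformlyOn f fbar atTop A) :
    ∀ᵐ x ∂(volume.restrict A),
      DifferentiableAt ℝ fbar x ∧ (∀ k, DifferentiableAt ℝ (f k) x) ∧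
        Tendsto (fun k => gradient (f k) x) atTop (nhds (gradient fbar x)) :=
  stmt6_general A hAopen f hf fbar hunif
end
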